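/- A set system 𝓕 ⊆ 2^[n] is shattering-extremal if and only if the set of standard monomials of the vanishing ideal I(𝓕) ⊴ 𝔽[x_1,…,x_n] is the same for every lexicographic term order (equivalently, for every term order), where 𝔽 is any field. -/

import Mathlib

open MvPolynomial

/-- Monomials of `𝔽[x_1,…,x_n]` identified with their exponent vectors. -/
abbrev Mon (n : ℕ) := Fin n →₀ ℕ

/-- A linear order on monomials is a term order if `1` (i.e. the zero exponent
vector) is minimal and the order is compatible with multiplication by monomials. -/
def IsTermOrder {n : ℕ} (lin : LinearOrder (Mon n)) : Prop :=
  (∀ u : Mon n, lin.le 0 u) ∧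
    ∀ u v w : Mon n, lin.le u v → lin.le (u + w) (v + w)

/-- The strict lexicographic comparison of exponent vectors induced by the variable
ordering `x_{σ 0} ≻ x_{σ 1} ≻ ⋯ ≻ x_{σ (n-1)}`. -/
def lexLt {n : ℕ} (σ : Equiv.Perm (Fin n)) (u v : Mon n) : Prop :=
  ∃ j : Fin n, u (σ j) < v (σ j) ∧ ∀ i : Fin n, i < j → u (σ i) = v (σ i)

/-- `lin` is the lexicographic term order induced by the variable ordering
`x_{σ 0} ≻ x_{σ 1} ≻ ⋯ ≻ x_{σ (n-1)}`. -/
def IsLexOrder {n : ℕ} (σ : Equiv.Perm (Fin n)) (lin : LinearOrder (Mon n)) : Prop :=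
  ∀ u v : Mon n, lin.lt u v ↔ lexLt σ u v

/-- `m` is the leading monomial of `f` with respect to the monomial order `lin`. -/
def IsLeadMon {n : ℕ} {F : Type*} [CommSemiring F] (lin : LinearOrder (Mon n))
    (f : MvPolynomial (Fin n) F) (m : Mon n) : Prop :=
  m ∈ f.support ∧ ∀ m' ∈ f.support, lin.le m' m

/-- The set of standard monomials of an ideal `I` with respect to the monomial
order `lin`: monomials that are not the leading monomial of any nonzero `f ∈ I`. -/
def stdMon {n : ℕ} {F : Type*} [CommSemiring F] (lin : LinearOrder (Mon n))
    (I : Ideal (MvPolynomial (Fin n) F)) : Set (Mon n) :=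
  { m | ¬ ∃ f ∈ I, f ≠ 0 ∧ IsLeadMon lin f m }

/-- The vanishing ideal of a point set `V ⊆ F^n`. -/
def vanishIdeal {n : ℕ} {F : Type*} [CommRing F] (V : Set (Fin n → F)) :
    Ideal (MvPolynomial (Fin n) F) where
  carrier := { f | ∀ v ∈ V, MvPolynomial.eval v f = 0 }
  add_mem' := by
    intro a b ha hb v hv
    simp [map_add, ha v hv, hb v hv]
  zero_mem' := by intro v hv; simp
  smul_mem' := by
    intro c f hf v hv
    simp [smul_eq_mul, hf v hv]

/-- A finite point set (in `{0,…,k-1}^n`, over any field) is extremal if its vanishing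
ideal has the same standard monomials for every lexicographic term order. -/
def IsExtremal {n : ℕ} {F : Type*} [CommRing F] (V : Set (Fin n → F)) : Prop :=
  ∀ (σ₁ σ₂ : Equiv.Perm (Fin n)) (lin₁ lin₂ : LinearOrder (Mon n)),
    IsLexOrder σ₁ lin₁ → IsLexOrder σ₂ lin₂ →
      stdMon lin₁ (vanishIdeal V) = stdMon lin₂ (vanishIdeal V)

/-- Embedding of a point of `{0,…,k-1}^n` into `F^n`. -/
def toField {n k : ℕ} (F : Type*) [Field F] (w : Fin n → Fin k) : Fin n → F :=
  fun i => ((w i : ℕ) : F)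

/-- Identification of a point of `{0,…,k-1}^n` with an exponent vector in `ℕ^n`. -/
noncomputable def toExp {n k : ℕ} (w : Fin n → Fin k) : Mon n :=
  Finsupp.equivFunOnFinite.symm fun i => (w i : ℕ)

/-- The downshift `D_i(V)` of `V ⊆ {0,…,k-1}^n` at coordinate `i`: its `i`-section at
each choice of the other coordinates is `{0,1,…,m-1}` where `m` is the size of the
corresponding `i`-section of `V`. -/
def downshift {n k : ℕ} (V : Finset (Fin n → Fin k)) (i : Fin n) :
    Finset (Fin n → Fin k) :=
  Finset.univ.filter fun w =>
    (w i : ℕ) < (Finset.univ.filter fun α : Fin k => Function.update w i α ∈ V).card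

/-- The iterated downshift `D_{σ(n-1)}(D_{σ(n-2)}(⋯(D_{σ 0}(V))))`,
i.e. downshifts are applied at coordinates `σ 0, σ 1, …, σ (n-1)` in this order. -/
def iterDownshift {n k : ℕ} (σ : Equiv.Perm (Fin n)) (V : Finset (Fin n → Fin k)) :
    Finset (Fin n → Fin k) :=
  (List.ofFn fun j : Fin n => σ j).foldl downshift V

/-- A polynomial is degree dominated (with dominating term `x^w`) if it equals
`x^w + Σ αᵢ x^{vᵢ}` where each `x^{vᵢ}` divides `x^w`. -/
def IsDegDominated {n : ℕ} {F : Type*} [CommSemiring F]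
    (f : MvPolynomial (Fin n) F) : Prop :=
  ∃ w : Mon n, MvPolynomial.coeff w f = 1 ∧ ∀ v ∈ f.support, v ≤ w

/-- `G` is a Gröbner basis of `I` with respect to the monomial order `lin`:
`G ⊆ I` and for every nonzero `f ∈ I` some `g ∈ G` has leading monomial dividing
the leading monomial of `f` (divisibility of monomials being `≤` of exponents). -/
def IsGroebner {n : ℕ} {F : Type*} [CommSemiring F] (lin : LinearOrder (Mon n))
    (G : Finset (MvPolynomial (Fin n) F)) (I : Ideal (MvPolynomial (Fin n) F)) : Prop :=
  (∀ g ∈ G, g ∈ I) ∧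
    ∀ f ∈ I, f ≠ 0 → ∀ m : Mon n, IsLeadMon lin f m →
      ∃ g ∈ G, ∃ mg : Mon n, IsLeadMon lin g mg ∧ mg ≤ m

/-- `G` is a universal Gröbner basis of `I` if it is a Gröbner basis for every term order. -/
def IsUnivGroebner {n : ℕ} {F : Type*} [CommSemiring F]
    (G : Finset (MvPolynomial (Fin n) F)) (I : Ideal (MvPolynomial (Fin n) F)) : Prop :=
  ∀ lin : LinearOrder (Mon n), IsTermOrder lin → IsGroebner lin G I

/-- A term order is an elimination order with respect to `x_i` if `x_i` is greater
than every monomial not involving `x_i`. -/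
def IsElimOrder {n : ℕ} (lin : LinearOrder (Mon n)) (i : Fin n) : Prop :=
  IsTermOrder lin ∧ ∀ m : Mon n, m i = 0 → lin.lt m (Finsupp.single i 1)

/-- A set system `𝓕` shatters `S` if every subset of `S` is the intersection of `S`
with a member of `𝓕`. -/
def Shatters {n : ℕ} (𝓕 : Finset (Finset (Fin n))) (S : Finset (Fin n)) : Prop :=
  ∀ T ⊆ S, ∃ Fm ∈ 𝓕, Fm ∩ S = T

open scoped Classical in
/-- The family `Sh(𝓕)` of sets shattered by `𝓕`. -/
noncomputable def shatteredFamily {n : ℕ} (𝓕 : Finset (Finset (Fin n))) :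
    Finset (Finset (Fin n)) :=
  Finset.univ.filter fun S => Shatters 𝓕 S

/-- A set system is shattering-extremal if it shatters exactly `|𝓕|` sets. -/
def IsSExtremal {n : ℕ} (𝓕 : Finset (Finset (Fin n))) : Prop :=
  (shatteredFamily 𝓕).card = 𝓕.card

/-- The characteristic vector of a set, as a point of `F^n`. -/
def charVec {n : ℕ} (F : Type*) [Field F] (Fm : Finset (Fin n)) : Fin n → F :=
  fun i => if i ∈ Fm then 1 else 0

/-- The squarefree monomial `∏_{i ∈ S} x_i` associated to a set `S ⊆ [n]`,
as an exponent vector. -/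
noncomputable def setMon {n : ℕ} (S : Finset (Fin n)) : Mon n :=
  Finsupp.equivFunOnFinite.symm fun i => if i ∈ S then 1 else 0

/-- The polynomial `f_{S,H} = (∏_{i∈H} x_i) ⬝ ∏_{i∈S∖H} (x_i - 1)`. -/
noncomputable def fSH {n : ℕ} (F : Type*) [Field F] (S H : Finset (Fin n)) :
    MvPolynomial (Fin n) F :=
  (∏ i ∈ H, X i) * ∏ i ∈ S \ H, (X i - 1)

/-- The downshift `D_i(𝓕)` of a set system. -/
def dshiftSet {n : ℕ} (𝓕 : Finset (Finset (Fin n))) (i : Fin n) :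
    Finset (Finset (Fin n)) :=
  𝓕.image (fun Fm => Fm.erase i) ∪ 𝓕.filter fun Fm => i ∈ Fm ∧ Fm.erase i ∈ 𝓕

/-- The iterated downshift `D_{σ(n-1)}(⋯(D_{σ 0}(𝓕)))` of a set system:
downshifts are applied at `σ 0, σ 1, …, σ (n-1)` in this order. -/
def iterDshiftSet {n : ℕ} (σ : Equiv.Perm (Fin n)) (𝓕 : Finset (Finset (Fin n))) :
    Finset (Finset (Fin n)) :=
  (List.ofFn fun j : Fin n => σ j).foldl dshiftSet 𝓕

/-- Restriction of an exponent vector in `ℕ^{n+1}` to its first `n` coordinates. -/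
noncomputable def restrictMon {n : ℕ} (w : Mon (n + 1)) : Mon n :=
  Finsupp.equivFunOnFinite.symm fun i => w i.castSucc

/-!
For every term order, the standard monomials of `I(𝓕)` are squarefree monomials `x_S` of sets `S`
shattered by `𝓕` (otherwise `x^m - x_{supp m}` or `f_{S,H}` lies in `I(𝓕)` with leading monomial
`x^m`, resp. `x_S`), and there are exactly `|𝓕|` of them, because their evaluations on `𝓕` form a
basis of `F^𝓕`. So for an s-extremal `𝓕` they are all of `Sh(𝓕)`, whatever the order.
Conversely, a shattered `S` gives a standard monomial `x_S` for a lex order in which the variables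
of `S` are the least significant: a polynomial of `I(𝓕)` with leading monomial `x_S` then involves
only the variables of `S`, hence vanishes on all of `2^S`, whose ideal has every `x_T`, `T ⊆ S`,
standard by the count above. If the standard monomials do not depend on the lex order, `Sh(𝓕)`
thus embeds into them, and `|Sh(𝓕)| = |𝓕|`.
-/

section

open Finset

variable {n : ℕ}

theorem IsTermOrder.le_of_le {lin : LinearOrder (Mon n)} (h : IsTermOrder lin) {u v : Mon n}
    (huv : u ≤ v) : lin.le u v := by
  simpa [tsub_add_cancel_of_le huv] using h.2 0 (v - u) u (h.1 _)

theorem exists_isLeadMon {R : Type*} [CommSemiring R] (lin : LinearOrder (Mon n))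
    {f : MvPolynomial (Fin n) R} (hf : f ≠ 0) : ∃ m, IsLeadMon lin f m :=
  @exists_max_image _ _ lin _ _ (support_nonempty.mpr hf)

@[reducible] noncomputable def lexOrder (σ : Equiv.Perm (Fin n)) : LinearOrder (Mon n) :=
  LinearOrder.lift' (fun u => toLex fun j => u (σ j)) fun u v h => by
    ext i
    simpa using congrFun h (σ.symm i)

theorem isLexOrder_lexOrder (σ : Equiv.Perm (Fin n)) : IsLexOrder σ (lexOrder σ) :=
  fun _ _ => ⟨fun ⟨j, hj, hlt⟩ => ⟨j, hlt, hj⟩, fun ⟨j, hlt, hj⟩ => ⟨j, hj, hlt⟩⟩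

theorem isTermOrder_lexOrder (σ : Equiv.Perm (Fin n)) : IsTermOrder (lexOrder σ) :=
  ⟨fun u => Pi.toLex_monotone fun j => Nat.zero_le (u (σ j)),
    fun _ _ w h => add_le_add_left (α := Lex (Fin n → ℕ)) h (toLex fun j => w (σ j))⟩

theorem IsLexOrder.le_iff_lexOrder_le {σ : Equiv.Perm (Fin n)} {lin : LinearOrder (Mon n)}
    (h : IsLexOrder σ lin) {u v : Mon n} : lin.le u v ↔ (lexOrder σ).le u v := by
  rw [@le_iff_lt_or_eq _ lin.toPartialOrder, @le_iff_lt_or_eq _ (lexOrder σ).toPartialOrder,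
    h, isLexOrder_lexOrder]

theorem IsLexOrder.isTermOrder {σ : Equiv.Perm (Fin n)} {lin : LinearOrder (Mon n)}
    (h : IsLexOrder σ lin) : IsTermOrder lin := by
  simp only [IsTermOrder, h.le_iff_lexOrder_le]
  exact isTermOrder_lexOrder σ

theorem setMon_apply (S : Finset (Fin n)) (i : Fin n) :
    setMon S i = if i ∈ S then 1 else 0 := rfl

@[simp]
theorem support_setMon (S : Finset (Fin n)) : (setMon S).support = S := by
  ext i
  simp [setMon_apply]

theorem setMon_injective : Function.Injective (setMon (n := n)) :=
  Function.LeftInverse.injective support_setMon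

theorem setMon_support_le (u : Mon n) : setMon u.support ≤ u := fun i => by
  by_cases hi : u i = 0 <;> simp [setMon_apply, hi, Nat.one_le_iff_ne_zero]

theorem setMon_eq_sum (S : Finset (Fin n)) : setMon S = ∑ i ∈ S, Finsupp.single i 1 := by
  ext i
  simp [setMon_apply, Finsupp.finsetSum_apply, Finsupp.single_apply]

section Evaluation

variable {F : Type*} [Field F]

theorem eval_charVec_monomial (H : Finset (Fin n)) (u : Mon n) (c : F) :
    eval (charVec F H) (monomial u c) = if u.support ⊆ H then c else 0 := by
  have hfactor : ∀ i ∈ u.support, charVec F H i ^ u i = if i ∈ H then 1 else 0 := fun i hi => by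
    simp [charVec, Finsupp.mem_support_iff.mp hi]
  rw [eval_monomial, Finsupp.prod, prod_congr rfl hfactor, prod_boole]
  simp [subset_iff]

open scoped Classical in
def familyIdeal (F : Type*) [Field F] (𝓕 : Finset (Finset (Fin n))) :
    Ideal (MvPolynomial (Fin n) F) :=
  vanishIdeal ((𝓕.image (charVec F) : Finset (Fin n → F)) : Set (Fin n → F))

theorem mem_familyIdeal {𝓕 : Finset (Finset (Fin n))} {f : MvPolynomial (Fin n) F} :
    f ∈ familyIdeal F 𝓕 ↔ ∀ G ∈ 𝓕, eval (charVec F G) f = 0 := by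
  simp [familyIdeal, vanishIdeal]

end Evaluation

section DegDominated

variable {R : Type*} [CommSemiring R]

def IsDegDominatedBy (f : MvPolynomial (Fin n) R) (w : Mon n) : Prop :=
  coeff w f = 1 ∧ ∀ v ∈ f.support, v ≤ w

theorem IsDegDominatedBy.mul {f g : MvPolynomial (Fin n) R} {a b : Mon n}
    (hf : IsDegDominatedBy f a) (hg : IsDegDominatedBy g b) :
    IsDegDominatedBy (f * g) (a + b) := by
  classical
  refine ⟨?_, fun m hm => ?_⟩
  · rw [coeff_mul, sum_eq_single (a, b) _ (by simp)]
    · simp [hf.1, hg.1]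
    rintro ⟨u, v⟩ huv hne
    by_contra hc
    have hua := hf.2 u (mem_support_iff.mpr (left_ne_zero_of_mul hc))
    have hvb := hg.2 v (mem_support_iff.mpr (right_ne_zero_of_mul hc))
    have hsum : u + v = a + b := mem_antidiagonal.mp huv
    refine hne (Prod.ext (le_antisymm hua ?_) (le_antisymm hvb ?_))
    · exact le_of_add_le_add_right (hsum ▸ add_le_add le_rfl hvb : a + b ≤ u + b)
    · exact le_of_add_le_add_left (hsum ▸ add_le_add hua le_rfl : a + b ≤ a + v)
  · obtain ⟨u, hu, v, hv, rfl⟩ := mem_add.mp (support_mul f g hm)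
    exact add_le_add (hf.2 u hu) (hg.2 v hv)

theorem isDegDominatedBy_one : IsDegDominatedBy (1 : MvPolynomial (Fin n) R) 0 := by
  classical
  refine ⟨coeff_zero_one, fun v hv => ?_⟩
  rw [mem_support_iff, coeff_one] at hv
  simp_all

theorem isDegDominatedBy_prod {ι : Type*} (s : Finset ι) (f : ι → MvPolynomial (Fin n) R)
    (w : ι → Mon n) (h : ∀ i ∈ s, IsDegDominatedBy (f i) (w i)) :
    IsDegDominatedBy (∏ i ∈ s, f i) (∑ i ∈ s, w i) := by
  classical
  induction s using Finset.induction_on with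
  | empty => simpa using isDegDominatedBy_one
  | insert a s ha ih =>
    rw [prod_insert ha, sum_insert ha]
    exact (h a (mem_insert_self a s)).mul (ih fun i hi => h i (mem_insert_of_mem hi))

theorem isDegDominatedBy_X (i : Fin n) :
    IsDegDominatedBy (X i : MvPolynomial (Fin n) R) (Finsupp.single i 1) := by
  classical
  refine ⟨coeff_X_same i, fun v hv => ?_⟩
  rw [mem_support_iff, coeff_X] at hv
  simp_all

theorem IsTermOrder.notMem_stdMon [Nontrivial R] {lin : LinearOrder (Mon n)}
    (hlin : IsTermOrder lin) {I : Ideal (MvPolynomial (Fin n) R)} {f : MvPolynomial (Fin n) R}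
    (hf : f ∈ I) {w : Mon n} (hw : IsDegDominatedBy f w) : w ∉ stdMon lin I := fun hstd =>
  hstd ⟨f, hf, fun h0 => by simpa [h0] using hw.1,
    mem_support_iff.mpr (by simp [hw.1]), fun v hv => hlin.le_of_le (hw.2 v hv)⟩

end DegDominated

theorem isDegDominatedBy_X_sub_one {R : Type*} [CommRing R] (i : Fin n) :
    IsDegDominatedBy (X i - 1 : MvPolynomial (Fin n) R) (Finsupp.single i 1) := by
  classical
  have hne : (0 : Mon n) ≠ Finsupp.single i 1 := (Finsupp.single_ne_zero.mpr one_ne_zero).symm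
  refine ⟨by simp [coeff_one, hne], fun v hv => ?_⟩
  rw [mem_support_iff, coeff_sub, coeff_X, coeff_one] at hv
  by_cases h0 : 0 = v
  · exact h0 ▸ zero_le
  · simp_all

section SetSystem

variable {F : Type*} [Field F]

theorem isDegDominatedBy_fSH {S H : Finset (Fin n)} (hH : H ⊆ S) :
    IsDegDominatedBy (fSH F S H) (setMon S) := by
  rw [setMon_eq_sum, ← sum_sdiff hH, add_comm]
  exact (isDegDominatedBy_prod _ _ _ fun i _ => isDegDominatedBy_X i).mul
    (isDegDominatedBy_prod _ _ _ fun i _ => isDegDominatedBy_X_sub_one i)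

theorem eval_charVec_fSH {S H : Finset (Fin n)} (hH : H ⊆ S) (G : Finset (Fin n)) :
    eval (charVec F G) (fSH F S H) = if G ∩ S = H then (-1) ^ (S \ H).card else 0 := by
  simp only [fSH, map_mul, map_prod, eval_X, map_sub, map_one, charVec]
  split_ifs with hG
  · subst hG
    have hinter : ∀ i ∈ G ∩ S, (if i ∈ G then (1 : F) else 0) = 1 := fun i hi =>
      if_pos (mem_inter.mp hi).1
    have hsdiff : ∀ i ∈ S \ (G ∩ S), (if i ∈ G then (1 : F) else 0) - 1 = -1 := fun i hi => by
      simp [show i ∉ G by grind]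
    rw [prod_congr rfl hinter, prod_congr rfl hsdiff]
    simp
  · obtain ⟨i, hiH, hiG⟩ | ⟨i, hiSH, hiG⟩ : (∃ i ∈ H, i ∉ G) ∨ ∃ i ∈ S \ H, i ∈ G := by
      by_contra! h
      exact hG (by ext i; grind)
    · exact mul_eq_zero_of_left (prod_eq_zero hiH (if_neg hiG)) _
    · exact mul_eq_zero_of_right _ (prod_eq_zero hiSH (by simp [hiG]))

theorem IsTermOrder.eq_setMon_support_of_mem_stdMon {lin : LinearOrder (Mon n)}
    (hlin : IsTermOrder lin) {𝓕 : Finset (Finset (Fin n))} {m : Mon n}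
    (hm : m ∈ stdMon lin (familyIdeal F 𝓕)) : m = setMon m.support := by
  by_contra hne
  classical
  refine hlin.notMem_stdMon (f := monomial m 1 - monomial (setMon m.support) 1) ?_ ?_ hm
  · refine mem_familyIdeal.mpr fun G _ => ?_
    simp [eval_charVec_monomial]
  · refine ⟨by simp [coeff_monomial, Ne.symm hne], fun v hv => ?_⟩
    rcases mem_union.mp (support_sub _ _ _ hv) with h | h
    · simp_all [support_monomial]
    · simp_all [support_monomial, setMon_support_le]

theorem IsTermOrder.shatters_of_setMon_mem_stdMon {lin : LinearOrder (Mon n)}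
    (hlin : IsTermOrder lin) {𝓕 : Finset (Finset (Fin n))} {S : Finset (Fin n)}
    (hS : setMon S ∈ stdMon lin (familyIdeal F 𝓕)) : _root_.Shatters 𝓕 S := by
  by_contra hsh
  obtain ⟨H, hHS, hH⟩ : ∃ H ⊆ S, ∀ G ∈ 𝓕, G ∩ S ≠ H := by simpa [_root_.Shatters] using hsh
  refine hlin.notMem_stdMon ?_ (isDegDominatedBy_fSH hHS) hS
  exact mem_familyIdeal.mpr fun G hG => by simp [eval_charVec_fSH hHS, hH G hG]

end SetSystem

section Counting

variable {F : Type*} [Field F] {𝓕 : Finset (Finset (Fin n))}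

variable (F 𝓕) in
noncomputable def evalOn : MvPolynomial (Fin n) F →ₗ[F] (𝓕 → F) :=
  LinearMap.pi fun G => (aeval (charVec F G.1)).toLinearMap

variable (F 𝓕) in
def supsetIndicator (T : Finset (Fin n)) : 𝓕 → F := fun G => if T ⊆ G.1 then 1 else 0

theorem evalOn_apply (f : MvPolynomial (Fin n) F) (G : 𝓕) :
    evalOn F 𝓕 f G = eval (charVec F G) f := by
  simp [evalOn]

theorem evalOn_monomial (u : Mon n) (c : F) :
    evalOn F 𝓕 (monomial u c) = c • supsetIndicator F 𝓕 u.support := by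
  ext G
  simp [evalOn_apply, eval_charVec_monomial, supsetIndicator]

theorem evalOn_eq_sum (f : MvPolynomial (Fin n) F) :
    evalOn F 𝓕 f = ∑ u ∈ f.support, coeff u f • supsetIndicator F 𝓕 u.support := by
  nth_rewrite 1 [f.as_sum]
  simp only [map_sum, evalOn_monomial]

theorem evalOn_eq_zero_iff {f : MvPolynomial (Fin n) F} :
    evalOn F 𝓕 f = 0 ↔ f ∈ familyIdeal F 𝓕 := by
  simp [mem_familyIdeal, funext_iff, evalOn_apply]

theorem range_evalOn : LinearMap.range (evalOn F 𝓕) = ⊤ := by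
  rw [eq_top_iff, ← (Pi.basisFun F 𝓕).span_eq, Submodule.span_le]
  rintro _ ⟨G, rfl⟩
  have hG : evalOn F 𝓕 (fSH F univ G) = (-1 : F) ^ (univ \ G.1).card • Pi.basisFun F 𝓕 G := by
    ext G'
    rw [evalOn_apply, eval_charVec_fSH (subset_univ _), inter_univ, Pi.smul_apply,
      Pi.basisFun_apply, Pi.single_apply]
    simp only [← Subtype.ext_iff]
    split_ifs <;> simp
  refine ⟨(-1 : F) ^ (univ \ G.1).card • fSH F univ G, ?_⟩
  rw [map_smul, hG, smul_smul, ← mul_pow, neg_one_mul, neg_neg, one_pow, one_smul]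

variable (F) in
open scoped Classical in
noncomputable def stdSets (lin : LinearOrder (Mon n)) (𝓕 : Finset (Finset (Fin n))) :
    Finset (Finset (Fin n)) :=
  {S | setMon S ∈ stdMon lin (familyIdeal F 𝓕)}

theorem mem_stdSets {lin : LinearOrder (Mon n)} {S : Finset (Fin n)} :
    S ∈ stdSets F lin 𝓕 ↔ setMon S ∈ stdMon lin (familyIdeal F 𝓕) := by
  simp [stdSets]

theorem IsTermOrder.stdMon_familyIdeal {lin : LinearOrder (Mon n)} (hlin : IsTermOrder lin) :
    stdMon lin (familyIdeal F 𝓕) = setMon '' stdSets F lin 𝓕 := by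
  ext m
  refine ⟨fun hm => ⟨m.support, ?_, ?_⟩, ?_⟩
  · rwa [mem_coe, mem_stdSets, ← hlin.eq_setMon_support_of_mem_stdMon hm]
  · exact (hlin.eq_setMon_support_of_mem_stdMon hm).symm
  · rintro ⟨S, hS, rfl⟩
    exact mem_stdSets.mp hS

theorem linearIndependent_supsetIndicator_stdSets (lin : LinearOrder (Mon n)) :
    LinearIndependent F fun S : stdSets F lin 𝓕 => supsetIndicator F 𝓕 S.1 := by
  classical
  rw [Fintype.linearIndependent_iff]
  intro g hg S
  set p := ∑ T : stdSets F lin 𝓕, monomial (setMon T.1) (g T)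
  have hcoeff : ∀ T, coeff (setMon T.1) p = g T := fun T => by
    rw [coeff_sum, sum_eq_single T (fun T' _ hT' => ?_) (by simp), coeff_monomial, if_pos rfl]
    rw [coeff_monomial, if_neg (fun h => hT' (Subtype.ext (setMon_injective h)))]
  have hp : p ∈ familyIdeal F 𝓕 :=
    evalOn_eq_zero_iff.mp (by simpa [p, map_sum, evalOn_monomial] using hg)
  by_contra hS
  have hp0 : p ≠ 0 := fun h => hS (by rw [← hcoeff, h, coeff_zero])
  obtain ⟨m, hm⟩ := exists_isLeadMon lin hp0
  obtain ⟨T, -, hT⟩ := mem_biUnion.mp (support_sum hm.1)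
  rw [mem_support_iff, coeff_monomial] at hT
  obtain rfl : setMon T.1 = m := by by_contra h; simp [h] at hT
  exact (mem_stdSets.mp T.2) ⟨p, hp, hp0, hm⟩

theorem IsTermOrder.supsetIndicator_mem_span {lin : LinearOrder (Mon n)} (hlin : IsTermOrder lin)
    (T : Finset (Fin n)) : supsetIndicator F 𝓕 T ∈
      Submodule.span F (Set.range fun S : stdSets F lin 𝓕 => supsetIndicator F 𝓕 S.1) := by
  let r : Finset (Fin n) → Finset (Fin n) → Prop := fun T' T => lin.lt (setMon T') (setMon T)
  have : IsTrans _ r := ⟨fun _ _ _ => @lt_trans _ lin.toPreorder _ _ _⟩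
  have : Std.Irrefl r := ⟨fun _ => @lt_irrefl _ lin.toPreorder _⟩
  induction T using (Finite.wellFounded_of_trans_of_irrefl r).induction with | _ T ih
  by_cases hT : T ∈ stdSets F lin 𝓕
  · exact Submodule.subset_span ⟨⟨T, hT⟩, rfl⟩
  obtain ⟨f, hfI, -, hlead⟩ := not_not.mp (mt mem_stdSets.mpr hT)
  have hc : coeff (setMon T) f ≠ 0 := mem_support_iff.mp hlead.1
  have hrel : coeff (setMon T) f • supsetIndicator F 𝓕 T =
      -∑ u ∈ f.support.erase (setMon T), coeff u f • supsetIndicator F 𝓕 u.support := by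
    have hsum := (evalOn_eq_sum f).symm.trans (evalOn_eq_zero_iff.mpr hfI)
    rwa [← add_sum_erase _ _ hlead.1, support_setMon, ← eq_neg_iff_add_eq_zero] at hsum
  rw [← inv_smul_smul₀ hc (supsetIndicator F 𝓕 T), hrel]
  refine Submodule.smul_mem _ _ (neg_mem (sum_mem fun u hu => Submodule.smul_mem _ _ (ih _ ?_)))
  exact @lt_of_le_of_lt _ lin.toPreorder _ _ _ (hlin.le_of_le (setMon_support_le u))
    (@lt_of_le_of_ne _ lin.toPartialOrder _ _ (hlead.2 u (mem_of_mem_erase hu))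
      (ne_of_mem_erase hu))

theorem IsTermOrder.span_supsetIndicator_stdSets {lin : LinearOrder (Mon n)}
    (hlin : IsTermOrder lin) :
    Submodule.span F (Set.range fun S : stdSets F lin 𝓕 => supsetIndicator F 𝓕 S.1) = ⊤ := by
  rw [eq_top_iff, ← range_evalOn]
  rintro _ ⟨f, rfl⟩
  rw [evalOn_eq_sum]
  exact sum_mem fun u _ => Submodule.smul_mem _ _ (hlin.supsetIndicator_mem_span _)

theorem IsTermOrder.card_stdSets {lin : LinearOrder (Mon n)} (hlin : IsTermOrder lin) :
    #(stdSets F lin 𝓕) = #𝓕 := by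
  have b := Module.Basis.mk (linearIndependent_supsetIndicator_stdSets (F := F) (𝓕 := 𝓕) lin)
    hlin.span_supsetIndicator_stdSets.ge
  simpa using (Module.finrank_eq_card_basis b).symm.trans (Module.finrank_fintype_fun_eq_card F)

end Counting

section Shattering

variable {F : Type*} [Field F] {𝓕 : Finset (Finset (Fin n))}

theorem mem_shatteredFamily {S : Finset (Fin n)} :
    S ∈ shatteredFamily 𝓕 ↔ _root_.Shatters 𝓕 S := by
  simp [shatteredFamily]

theorem IsTermOrder.stdSets_subset_shatteredFamily {lin : LinearOrder (Mon n)}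
    (hlin : IsTermOrder lin) : stdSets F lin 𝓕 ⊆ shatteredFamily 𝓕 := fun _ hS =>
  mem_shatteredFamily.mpr (hlin.shatters_of_setMon_mem_stdMon (mem_stdSets.mp hS))

theorem IsTermOrder.stdSets_powerset {lin : LinearOrder (Mon n)} (hlin : IsTermOrder lin)
    (S : Finset (Fin n)) : stdSets F lin S.powerset = S.powerset := by
  have hsub : stdSets F lin S.powerset ⊆ S.powerset := fun T hT => by
    obtain ⟨G, hG, hGT⟩ :=
      mem_shatteredFamily.mp (hlin.stdSets_subset_shatteredFamily hT) T subset_rfl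
    exact mem_powerset.mpr ((inter_eq_right.mp hGT).trans (mem_powerset.mp hG))
  exact eq_of_subset_of_card_le hsub hlin.card_stdSets.ge

theorem IsLexOrder.support_subset {σ : Equiv.Perm (Fin n)} {lin : LinearOrder (Mon n)}
    (hlex : IsLexOrder σ lin) {S : Finset (Fin n)} (hσ : ∀ i j, σ i ∉ S → σ j ∈ S → i < j)
    {u : Mon n} (hu : lin.le u (setMon S)) : u.support ⊆ S := by
  intro i hi
  by_contra hiS
  rcases @eq_or_lt_of_le _ lin.toPartialOrder _ _ hu with rfl | hlt
  · exact hiS (by simpa using hi)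
  obtain ⟨j, hj, heq⟩ := (hlex _ _).mp hlt
  have hjS : σ j ∈ S := by
    by_contra h
    simp [setMon_apply, h] at hj
  have := heq (σ.symm i) (hσ _ _ (by simpa using hiS) hjS)
  simp_all [setMon_apply]

theorem eval_charVec_eq_of_inter_eq {f : MvPolynomial (Fin n) F} {S G H : Finset (Fin n)}
    (hf : ∀ u ∈ f.support, u.support ⊆ S) (hGH : G ∩ S = H ∩ S) :
    eval (charVec F G) f = eval (charVec F H) f := by
  nth_rewrite 1 [f.as_sum]
  nth_rewrite 3 [f.as_sum]
  simp only [map_sum, eval_charVec_monomial]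
  refine sum_congr rfl fun u hu => ?_
  refine if_congr ?_ rfl rfl
  simpa [subset_inter_iff, hf u hu] using congrArg (u.support ⊆ ·) hGH

theorem IsLexOrder.mem_stdSets_of_shatters {σ : Equiv.Perm (Fin n)} {lin : LinearOrder (Mon n)}
    (hlex : IsLexOrder σ lin) {S : Finset (Fin n)} (hσ : ∀ i j, σ i ∉ S → σ j ∈ S → i < j)
    (hS : _root_.Shatters 𝓕 S) : S ∈ stdSets F lin 𝓕 := by
  rw [mem_stdSets]
  rintro ⟨f, hfI, hf0, hlead⟩
  have hsupp : ∀ u ∈ f.support, u.support ⊆ S := fun u hu =>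
    hlex.support_subset hσ (hlead.2 u hu)
  have hfS : f ∈ familyIdeal F S.powerset := mem_familyIdeal.mpr fun H hH => by
    obtain ⟨G, hG, hGS⟩ := hS H (mem_powerset.mp hH)
    rw [← eval_charVec_eq_of_inter_eq hsupp
      (hGS.trans (inter_eq_left.mpr (mem_powerset.mp hH)).symm)]
    exact mem_familyIdeal.mp hfI G hG
  have hstd := (hlex.isTermOrder.stdSets_powerset (F := F) S).symm ▸ mem_powerset_self S
  exact mem_stdSets.mp hstd ⟨f, hfS, hf0, hlead⟩

end Shattering

theorem exists_perm_lt_of_notMem_of_mem (S : Finset (Fin n)) :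
    ∃ σ : Equiv.Perm (Fin n), ∀ i j, σ i ∉ S → σ j ∈ S → i < j := by
  refine ⟨Tuple.sort fun i => decide (i ∈ S), fun i j hi hj => ?_⟩
  by_contra! h
  have := Tuple.monotone_sort (fun i => decide (i ∈ S)) h
  simp_all [Bool.le_iff_imp]

section Extremal

variable {F : Type*} [Field F] {𝓕 : Finset (Finset (Fin n))}

theorem IsSExtremal.stdMon_familyIdeal (h𝓕 : IsSExtremal 𝓕) {lin : LinearOrder (Mon n)}
    (hlin : IsTermOrder lin) : stdMon lin (familyIdeal F 𝓕) = setMon '' shatteredFamily 𝓕 := by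
  rw [hlin.stdMon_familyIdeal, eq_of_subset_of_card_le hlin.stdSets_subset_shatteredFamily
    (by rw [h𝓕, hlin.card_stdSets])]

theorem isSExtremal_of_stdMon_lexOrder_eq
    (h : ∀ σ, stdMon (lexOrder σ) (familyIdeal F 𝓕) = stdMon (lexOrder 1) (familyIdeal F 𝓕)) :
    IsSExtremal 𝓕 := by
  have hsub : shatteredFamily 𝓕 ⊆ stdSets F (lexOrder 1) 𝓕 := fun S hS => by
    obtain ⟨σ, hσ⟩ := exists_perm_lt_of_notMem_of_mem S
    have := (isLexOrder_lexOrder σ).mem_stdSets_of_shatters (F := F) hσ (mem_shatteredFamily.mp hS)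
    rwa [mem_stdSets, h σ, ← mem_stdSets] at this
  rw [IsSExtremal, ← (isTermOrder_lexOrder 1).card_stdSets (F := F) (𝓕 := 𝓕),
    subset_antisymm (isTermOrder_lexOrder 1).stdSets_subset_shatteredFamily hsub]

end Extremal

end

open scoped Classical in
/-- Proposition `extr<=>smua`.
A set system `𝓕 ⊆ 2^[n]` is shattering-extremal if and only if the standard monomials
of `I(𝓕) ⊴ 𝔽[x]` are the same for every lexicographic term order (equivalently, for
every term order). -/
theorem sExtremal_iff_stdMon_invariant {n : ℕ} {F : Type*} [Field F]
    (𝓕 : Finset (Finset (Fin n))) :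
    (IsSExtremal 𝓕 ↔
      ∀ (σ₁ σ₂ : Equiv.Perm (Fin n)) (lin₁ lin₂ : LinearOrder (Mon n)),
        IsLexOrder σ₁ lin₁ → IsLexOrder σ₂ lin₂ →
          stdMon lin₁ (vanishIdeal ((𝓕.image (charVec F) : Finset (Fin n → F)) :
              Set (Fin n → F))) =
            stdMon lin₂ (vanishIdeal ((𝓕.image (charVec F) : Finset (Fin n → F)) :
              Set (Fin n → F)))) ∧
    (IsSExtremal 𝓕 ↔
      ∀ lin₁ lin₂ : LinearOrder (Mon n), IsTermOrder lin₁ → IsTermOrder lin₂ →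
        stdMon lin₁ (vanishIdeal ((𝓕.image (charVec F) : Finset (Fin n → F)) :
            Set (Fin n → F))) =
          stdMon lin₂ (vanishIdeal ((𝓕.image (charVec F) : Finset (Fin n → F)) :
            Set (Fin n → F)))) := by
  refine ⟨⟨fun h _ _ lin₁ lin₂ h₁ h₂ => ?_, fun h => ?_⟩,
    ⟨fun h lin₁ lin₂ h₁ h₂ => ?_, fun h => ?_⟩⟩
  · exact (h.stdMon_familyIdeal h₁.isTermOrder).trans (h.stdMon_familyIdeal h₂.isTermOrder).symm
  · exact isSExtremal_of_stdMon_lexOrder_eq fun σ =>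
      h σ 1 _ _ (isLexOrder_lexOrder σ) (isLexOrder_lexOrder 1)
  · exact (h.stdMon_familyIdeal h₁).trans (h.stdMon_familyIdeal h₂).symm
  · exact isSExtremal_of_stdMon_lexOrder_eq fun σ =>
      h _ _ (isTermOrder_lexOrder σ) (isTermOrder_lexOrder 1)
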